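/- Let λ = Δ_{n1,…,nk}, let P_i be the peak of the i-th component Δ_{n_i}, and for nonnegative integers t1,…,tk with t1 = tk = 0 let L'(λ;t1,…,tk) be the set of lattice paths μ ∈ L(λ;0,0) such that for each i the intersection of μ with the line of slope −1 through P_i is P_i+(−t_i,t_i). Then Σ_{μ ∈ L'(λ;t1,…,tk)} q^{|λ/μ|} = Π_{i=1}^{k−1} q^{n_i t_i + n_{i+1} t_{i+1} + (t_i − t_{i+1})²/2} · [n_i+n_{i+1} choose n_i+t_i−t_{i+1}]_q. -/

import Mathlib

open scoped BigOperators

namespace DyckTilings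

/-- In the step word of a lattice path, `false` is a down step `(1,0)` and
`true` is an up step `(0,1)`.  `pathX w x0 c` is the x-coordinate of the point
of the path (started at a point with x-coordinate `x0` on the diagonal
`x + y = 0`) lying on the diagonal `x + y = c`, i.e. the point reached after
`c` steps. -/
def pathX (w : List Bool) (x0 : ℤ) (c : ℤ) : ℤ :=
  x0 + ((w.take c.toNat).count false : ℤ)

/-- `w` is (the step word of) a Dyck path of length `2 * n`: a lattice path
from `(0,0)` to `(n,n)` never going below the line `y = x`. -/
def IsDyckWord (n : ℕ) (w : List Bool) : Prop :=
  w.length = 2 * n ∧ w.count false = n ∧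
    ∀ c : ℤ, 0 ≤ c → c ≤ 2 * n → 2 * pathX w 0 c ≤ c

/-- the Dyck path `Δ_k`: `k` up steps followed by `k` down steps -/
def delta (k : ℕ) : List Bool :=
  List.replicate k true ++ List.replicate k false

/-- `Δ_{N 0, N 1, …, N (k-1)} = Δ_{N 0} * ⋯ * Δ_{N (k-1)}` (concatenation of
Dyck paths is concatenation of their step words) -/
def deltaComp (N : ℕ → ℕ) (k : ℕ) : List Bool :=
  ((List.range k).map fun i => delta (N i)).flatten

/-- the q-integer `[m]_q = 1 + q + ⋯ + q^(m-1)` -/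
def qint {K : Type*} [CommRing K] (q : K) (m : ℕ) : K :=
  ∑ i ∈ Finset.range m, q ^ i

/-- the q-factorial `[m]_q! = [1]_q [2]_q ⋯ [m]_q` -/
def qfact {K : Type*} [CommRing K] (q : K) (m : ℕ) : K :=
  ∏ i ∈ Finset.range m, qint q (i + 1)

/-- the q-binomial coefficient `[m choose j]_q`, equal to `0` when `j < 0` or
`j > m` -/
noncomputable def qbinom {K : Type*} [Field K] (q : K) (m : ℕ) (j : ℤ) : K :=
  if 0 ≤ j ∧ j ≤ m then qfact q m / (qfact q j.toNat * qfact q (m - j.toNat)) else 0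

/-- the height (value of `y - x`) of the point of the path `w` (started on the
main diagonal) lying on the diagonal `x + y = c` -/
def heightAt (w : List Bool) (c : ℕ) : ℤ :=
  (c : ℤ) - 2 * pathX w 0 (c : ℤ)

/-- the indices of the up steps of `w`; each chord of `w` consists of an up
step and its matching down step, so chords are indexed by `upSteps w` -/
def upSteps (w : List Bool) : Finset ℕ :=
  (Finset.range w.length).filter fun i => w.getD i false = true

/-- the index of the down step matched with the up step at index `i` -/
noncomputable def matchIdx (w : List Bool) (i : ℕ) : ℕ :=
  sInf {j : ℕ | i < j ∧ heightAt w (j + 1) = heightAt w i}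

/-- the length `|c|` of the chord of the up step at index `i`: the difference
of the x-coordinates of the starting point of the up step and the ending point
of the matching down step -/
noncomputable def chordLen (w : List Bool) (i : ℕ) : ℕ :=
  (pathX w 0 ((matchIdx w i : ℤ) + 1) - pathX w 0 (i : ℤ)).toNat

/-- the height `ht(c)` of the chord of the up step at index `i`: the chord lies
between the lines `y = x + ht(c) - 1` and `y = x + ht(c)` -/
def chordHt (w : List Bool) (i : ℕ) : ℕ := (heightAt w (i + 1)).toNat

/-- `ht(μ) = Σ_{c ∈ C(μ)} (ht(c) - 1)` -/
def htSum (w : List Bool) : ℕ := ∑ i ∈ upSteps w, (chordHt w i - 1)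

/-! ### Skew shapes and (full) cover-inclusive Dyck tilings -/

/-- The set of cells of the skew shape `lam/mu`, for Dyck paths `lam` and `mu`
with `mu` weakly above `lam`; the cell `(x,y)` is the unit square
`[x,x+1] × [y,y+1]`, and it belongs to `lam/mu` exactly when, on the diagonal
`x + y + 1` through its center, `mu` passes weakly to its left and `lam`
weakly to its right. -/
def skewCells (lam mu : List Bool) : Set (ℤ × ℤ) :=
  {c | pathX mu 0 (c.1 + c.2 + 1) ≤ c.1 ∧ c.1 + 1 ≤ pathX lam 0 (c.1 + c.2 + 1)}

/-- the number of cells `|λ/μ|` of the skew shape -/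
noncomputable def ncells (lam mu : List Bool) : ℕ := (skewCells lam mu).ncard

/-- the cells of a ribbon starting at the cell `p`, with `true` = north step
and `false` = east step -/
def cellsOf : List Bool → ℤ × ℤ → List (ℤ × ℤ)
  | [], p => [p]
  | s :: rest, p => p :: cellsOf rest (if s then (p.1, p.2 + 1) else (p.1 + 1, p.2))

/-- A Dyck tile: a ribbon whose sequence of cells, read from southwest to
northeast, follows a Dyck word (equivalently, the centers of its cells form a
Dyck path). -/
def IsDyckTile (s : Set (ℤ × ℤ)) : Prop :=
  ∃ (x0 y0 : ℤ) (k : ℕ) (u : List Bool), IsDyckWord k u ∧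
    s = {c | c ∈ cellsOf u (x0, y0)}

/-- southeast translation by `(k, -k)` -/
def shiftSE (k : ℤ) (s : Set (ℤ × ℤ)) : Set (ℤ × ℤ) :=
  (fun c => (c.1 + k, c.2 - k)) '' s

/-- cover-inclusiveness: if a tile `η₁` has a cell to the southeast of a cell
of a tile `η₂`, then that southeast translation of `η₂` is contained in `η₁` -/
def IsCoverInclusive (T : Set (Set (ℤ × ℤ))) : Prop :=
  ∀ η₁ ∈ T, ∀ η₂ ∈ T, ∀ c ∈ η₂, ∀ k : ℤ, 1 ≤ k →
    (c.1 + k, c.2 - k) ∈ η₁ → shiftSE k η₂ ⊆ η₁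

/-- `T` is a cover-inclusive Dyck tiling of the skew shape `lam/mu` (in
particular `mu` lies weakly above `lam`, so that `lam/mu` is defined). -/
def IsDyckTiling (lam mu : List Bool) (T : Set (Set (ℤ × ℤ))) : Prop :=
  (∀ c : ℤ, pathX mu 0 c ≤ pathX lam 0 c) ∧
  (∀ η ∈ T, IsDyckTile η) ∧
  T.PairwiseDisjoint id ∧
  (⋃ η ∈ T, η) = skewCells lam mu ∧
  IsCoverInclusive T

/-- the number of tiles `|T|` of a tiling -/
noncomputable def ntiles (T : Set (Set (ℤ × ℤ))) : ℕ := T.ncard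

/-- the half-length of a Dyck tile (a Dyck tile of length `2k` has `2k+1`
cells) -/
noncomputable def halfLen (s : Set (ℤ × ℤ)) : ℕ := s.ncard / 2

/-- `‖T‖`: the sum of the half-lengths of the tiles of `T` -/
noncomputable def normT (T : Set (Set (ℤ × ℤ))) : ℕ := ∑ᶠ η ∈ T, halfLen η

/-! ### Triangles, regions `λ/μ`, and truncated Dyck tilings

The unit cell `(x,y)` is cut by its diagonal of slope `-1` into a southwest
half-cell, the triangle `(x, y, false)`, and a northeast half-cell, the
triangle `(x, y, true)`. -/

/-- Membership of a triangle in the region `lam/mu`, where `lam` is a Dyck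
path of semilength `n` from `(0,0)` to `(n,n)` and `mu` is a lattice path
starting at `(-a, a)` lying weakly above `lam`; the region is bounded by
`lam`, `mu` and the two segments of slope `-1` joining `(0,0)` to `(-a,a)` and
`(n,n)` to the endpoint of `mu`. -/
def TriInRegion (n : ℕ) (lam mu : List Bool) (a : ℤ) (t : ℤ × ℤ × Bool) : Prop :=
  pathX mu (-a) (t.1 + t.2.1 + 1) ≤ t.1 ∧
  t.1 + 1 ≤ pathX lam 0 (t.1 + t.2.1 + 1) ∧
  (if t.2.2 then 0 ≤ t.1 + t.2.1 + 1 ∧ t.1 + t.2.1 + 2 ≤ 2 * (n : ℤ)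
   else 0 ≤ t.1 + t.2.1 ∧ t.1 + t.2.1 + 1 ≤ 2 * (n : ℤ))

/-- `L(λ; a, b)`: the lattice paths of up and down steps from `(-a, a)` to
`(n-b, n+b)` that never go below `lam` -/
def LSet (n : ℕ) (lam : List Bool) (a b : ℤ) : Set (List Bool) :=
  {w | w.length = 2 * n ∧ (w.count false : ℤ) = (n : ℤ) - b + a ∧
    ∀ c : ℤ, 0 ≤ c → c ≤ 2 * n → pathX w (-a) c ≤ pathX lam 0 c}

/-- twice the area `|λ/μ|` of the region `lam/mu` (i.e. the number of
triangles contained in it) -/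
def area2 (n : ℕ) (lam mu : List Bool) (a : ℤ) : ℤ :=
  ∑ d ∈ Finset.range (2 * n),
    (pathX lam 0 (d : ℤ) - pathX mu (-a) (d : ℤ) +
      (pathX lam 0 ((d : ℤ) + 1) - pathX mu (-a) ((d : ℤ) + 1)))

/-- the last (northeast) cell of a ribbon with start cell `(x0, y0)` and step
word `u` -/
def lastCell (x0 y0 : ℤ) (u : List Bool) : ℤ × ℤ :=
  (x0 + u.count false, y0 + u.count true)

/-- A truncated Dyck tile: a Dyck tile of positive length with the southwest
half-cell of its southwest cell and the northeast half-cell of its northeast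
cell cut off. -/
def IsTruncTile (s : Set (ℤ × ℤ × Bool)) : Prop :=
  ∃ (x0 y0 : ℤ) (k : ℕ) (u : List Bool), 0 < k ∧ IsDyckWord k u ∧
    s = {t : ℤ × ℤ × Bool | (t.1, t.2.1) ∈ cellsOf u (x0, y0)} \
        {(x0, y0, false), ((lastCell x0 y0 u).1, (lastCell x0 y0 u).2, true)}

/-- southeast translation of a set of triangles by `(1, -1)` -/
def shiftTriSE (s : Set (ℤ × ℤ × Bool)) : Set (ℤ × ℤ × Bool) :=
  (fun t => (t.1 + 1, t.2.1 - 1, t.2.2)) '' s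

/-- `T` is a cover-inclusive truncated Dyck tiling of (a subregion of) the
region `lam/mu`: the tiles are disjoint truncated Dyck tiles inside the
region, every tile whose southeast translate by `(1,-1)` meets the region has
this translate contained in a tile of `T`, and no two tiles share a border of
slope `-1`. -/
def IsTruncTiling (n : ℕ) (lam mu : List Bool) (a : ℤ)
    (T : Set (Set (ℤ × ℤ × Bool))) : Prop :=
  (∀ η ∈ T, IsTruncTile η) ∧
  T.PairwiseDisjoint id ∧
  (∀ η ∈ T, ∀ t ∈ η, TriInRegion n lam mu a t) ∧
  (∀ η ∈ T, (∃ t ∈ shiftTriSE η, TriInRegion n lam mu a t) →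
      ∃ η' ∈ T, shiftTriSE η ⊆ η') ∧
  (∀ η₁ ∈ T, ∀ η₂ ∈ T, η₁ ≠ η₂ →
      ∀ x y : ℤ, ¬((x, y, false) ∈ η₁ ∧ (x, y, true) ∈ η₂))

/-- the half-length of a truncated Dyck tile (a truncated Dyck tile of
half-length `k` consists of `4k` triangles) -/
noncomputable def halfLenT (s : Set (ℤ × ℤ × Bool)) : ℕ := s.ncard / 4

/-- `‖T‖` for truncated tilings: the sum of the half-lengths of the tiles -/
noncomputable def normTT (T : Set (Set (ℤ × ℤ × Bool))) : ℕ := ∑ᶠ η ∈ T, halfLenT η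

/-- `B_q(λ; a, b) = Σ_{μ ∈ L(λ;a,b)} Σ_{T ∈ TD(λ/μ)} q^{|λ/μ| - ‖T‖}`, a
polynomial in `q^{1/2}`, expressed in the variable `v = q^{1/2}` (so `q = v²`
and `q^{|λ/μ| - ‖T‖} = v^{2|λ/μ| - 2‖T‖}`). -/
noncomputable def B (v : RatFunc ℚ) (n : ℕ) (lam : List Bool) (a b : ℤ) : RatFunc ℚ :=
  ∑ᶠ mu ∈ LSet n lam a b, ∑ᶠ T ∈ {T | IsTruncTiling n lam mu a T},
    v ^ (area2 n lam mu a - 2 * (normTT T : ℤ))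

/-! ### Hermite histories and matchings -/

/-- A Hermite history on the Dyck path `mu` of length `2n`: a labeling of the
down steps of `mu` such that a down step of height `h` gets a label in
`{0, 1, …, h-1}` (encoded as a function on `ℕ` vanishing off the down steps). -/
def HHSet (n : ℕ) (mu : List Bool) : Set (ℕ → ℕ) :=
  {σ | (∀ j, j < 2 * n → mu.getD j true = false → σ j < (heightAt mu j).toNat) ∧
       ∀ j, ¬(j < 2 * n ∧ mu.getD j true = false) → σ j = 0}

/-- `‖H‖`: the sum of the labels of a Hermite history -/
def normH (n : ℕ) (σ : ℕ → ℕ) : ℕ := ∑ j ∈ Finset.range (2 * n), σ j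

/-- a complete matching on `{0, 1, …, 2n-1}` -/
def IsMatching (n : ℕ) (π : Set (ℕ × ℕ)) : Prop :=
  (∀ p ∈ π, p.1 < p.2 ∧ p.2 < 2 * n) ∧
  ∀ m, m < 2 * n → ∃! p, p ∈ π ∧ (p.1 = m ∨ p.2 = m)

/-- `M(μ)`: the complete matchings whose shape is the Dyck path `mu` (the
`i`-th step of `mu` is an up step iff `i` is the smaller element of its pair) -/
def MSet (n : ℕ) (mu : List Bool) : Set (Set (ℕ × ℕ)) :=
  {π | IsMatching n π ∧ ∀ i, i < 2 * n → (mu.getD i false = true ↔ ∃ p ∈ π, p.1 = i)}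

/-- the number of crossings of a matching -/
noncomputable def cro (π : Set (ℕ × ℕ)) : ℕ :=
  {pq : (ℕ × ℕ) × (ℕ × ℕ) | pq.1 ∈ π ∧ pq.2 ∈ π ∧
    pq.1.1 < pq.2.1 ∧ pq.2.1 < pq.1.2 ∧ pq.1.2 < pq.2.2}.ncard

/-- the number of nestings of a matching -/
noncomputable def nest (π : Set (ℕ × ℕ)) : ℕ :=
  {pq : (ℕ × ℕ) × (ℕ × ℕ) | pq.1 ∈ π ∧ pq.2 ∈ π ∧
    pq.1.1 < pq.2.1 ∧ pq.2.2 < pq.1.2}.ncard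

/-- `D(*/μ)`: cover-inclusive Dyck tilings of `λ/μ` over all Dyck paths `λ`
of length `2n` (for fixed `mu`, a tiling determines `lam`) -/
def DstarSet (n : ℕ) (mu : List Bool) : Set (Set (Set (ℤ × ℤ))) :=
  {T | ∃ lam, IsDyckWord n lam ∧ IsDyckTiling lam mu T}

/-- `D(2n)`: the disjoint union of the sets `D(ν/ρ)` over all pairs of Dyck
paths `ν, ρ` of length `2n`, realized as the set of triples `(ν, ρ, T)` -/
def DDSet (n : ℕ) : Set (List Bool × List Bool × Set (Set (ℤ × ℤ))) :=
  {x | IsDyckWord n x.1 ∧ IsDyckWord n x.2.1 ∧ IsDyckTiling x.1 x.2.1 x.2.2}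


/-! A path `μ ∈ L'` must follow `λ` up to its first peak and after its last one; between the
peaks `P_i` and `P_(i+1)` it is an arbitrary word with `N i + t i - t (i + 1)` down steps
running above the valley `valley (N i) (N (i + 1))` of `λ`. The area between two paths is additive
along such a decomposition, and over one valley it is a constant plus the number of
inversions of the word. So the sum factors into generating functions of inversions of binary
words with a fixed number of down steps, which are the q-binomial coefficients. -/

def words : ℕ → Finset (List Bool)
  | 0 => {[]}
  | m + 1 => (words m).image (List.cons true) ∪ (words m).image (List.cons false)

@[simp]
lemma mem_words {m : ℕ} {u : List Bool} : u ∈ words m ↔ u.length = m := by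
  induction m generalizing u with
  | zero => simp [words]
  | succ m ih =>
    cases u with
    | nil => simp [words]
    | cons b v => cases b <;> simp [words, ih]

def wordsWithDowns (m : ℕ) (d : ℤ) : Finset (List Bool) :=
  (words m).filter fun u => (u.count false : ℤ) = d

@[simp]
lemma mem_wordsWithDowns {m : ℕ} {d : ℤ} {u : List Bool} :
    u ∈ wordsWithDowns m d ↔ u.length = m ∧ (u.count false : ℤ) = d := by
  simp [wordsWithDowns]

lemma wordsWithDowns_eq_empty {m : ℕ} {d : ℤ} (hd : d < 0 ∨ (m : ℤ) < d) :
    wordsWithDowns m d = ∅ := by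
  ext u
  simp only [mem_wordsWithDowns, Finset.notMem_empty, iff_false, not_and]
  rintro rfl rfl
  have := u.count_le_length (a := false)
  omega

lemma eq_replicate_true_iff {u : List Bool} {m : ℕ} :
    u = List.replicate m true ↔ u.length = m ∧ u.count false = 0 := by
  simp [List.eq_replicate_iff, List.count_eq_zero]

lemma eq_replicate_false_iff {u : List Bool} {m : ℕ} :
    u = List.replicate m false ↔ u.length = m ∧ u.count false = m := by
  rw [List.eq_replicate_iff]
  constructor
  · rintro ⟨rfl, h⟩
    exact ⟨rfl, List.count_eq_length.mpr fun b hb => (h b hb).symm⟩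
  · rintro ⟨rfl, h⟩
    exact ⟨rfl, fun b hb => (List.count_eq_length.mp h b hb).symm⟩

lemma wordsWithDowns_zero (m : ℕ) : wordsWithDowns m 0 = {List.replicate m true} := by
  ext u
  rw [mem_wordsWithDowns, Finset.mem_singleton, eq_replicate_true_iff]
  omega

lemma sum_wordsWithDowns_succ {M : Type*} [AddCommMonoid M] (m : ℕ) (d : ℤ)
    (f : List Bool → M) :
    ∑ u ∈ wordsWithDowns (m + 1) d, f u
      = ∑ v ∈ wordsWithDowns m d, f (true :: v)
        + ∑ v ∈ wordsWithDowns m (d - 1), f (false :: v) := by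
  have hsplit : wordsWithDowns (m + 1) d
      = (wordsWithDowns m d).image (List.cons true)
        ∪ (wordsWithDowns m (d - 1)).image (List.cons false) := by
    ext u
    cases u with
    | nil => simp
    | cons b v =>
      cases b
      · simp
        omega
      · simp
  rw [hsplit, Finset.sum_union, Finset.sum_image, Finset.sum_image]
  · exact fun _ _ _ _ h => List.cons_injective h
  · exact fun _ _ _ _ h => List.cons_injective h
  · rw [Finset.disjoint_left]
    rintro _ h₁ h₂
    obtain ⟨_, _, rfl⟩ := Finset.mem_image.mp h₁
    obtain ⟨_, _, h⟩ := Finset.mem_image.mp h₂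
    cases h

def inversions : List Bool → ℕ
  | [] => 0
  | b :: v => (if b then v.count false else 0) + inversions v

lemma inversions_replicate_true (m : ℕ) : inversions (List.replicate m true) = 0 := by
  induction m with
  | zero => rfl
  | succ m ih => simp [List.replicate_succ, inversions, ih, List.count_replicate]

lemma inversions_replicate_false_append_replicate_true (a b : ℕ) :
    inversions (List.replicate a false ++ List.replicate b true) = 0 := by
  induction a with
  | zero => simpa using inversions_replicate_true b
  | succ a ih => simpa [List.replicate_succ, inversions] using ih

lemma qint_add {K : Type*} [CommRing K] (q : K) (a b : ℕ) :
    qint q (a + b) = qint q a + q ^ a * qint q b := by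
  simp [qint, Finset.sum_range_add, Finset.mul_sum, pow_add]

lemma qfact_succ {K : Type*} [CommRing K] (q : K) (m : ℕ) :
    qfact q (m + 1) = qfact q m * qint q (m + 1) :=
  Finset.prod_range_succ _ m

section InversionGeneratingFunction

variable {K : Type*} [CommRing K] (q : K)

lemma sum_pow_inversions_wordsWithDowns_zero (m : ℕ) :
    ∑ u ∈ wordsWithDowns m 0, q ^ inversions u = 1 := by
  simp [wordsWithDowns_zero, inversions_replicate_true]

/-- The q-Pascal rule, read off from the first letter of a word. -/
lemma sum_pow_inversions_wordsWithDowns_succ (m d : ℕ) :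
    ∑ u ∈ wordsWithDowns (m + 1) (d + 1), q ^ inversions u
      = q ^ (d + 1) * ∑ u ∈ wordsWithDowns m (d + 1), q ^ inversions u
        + ∑ u ∈ wordsWithDowns m d, q ^ inversions u := by
  rw [sum_wordsWithDowns_succ, Finset.mul_sum, add_sub_cancel_right]
  congr 1
  · refine Finset.sum_congr rfl fun u hu => ?_
    rw [mem_wordsWithDowns] at hu
    simp only [inversions, if_true, pow_add]
    rw [show u.count false = d + 1 by omega]
    ring
  · simp [inversions]

lemma sum_pow_inversions_mul_qfact (m d : ℕ) (hd : d ≤ m) :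
    (∑ u ∈ wordsWithDowns m d, q ^ inversions u) * (qfact q d * qfact q (m - d))
      = qfact q m := by
  induction m generalizing d with
  | zero =>
    obtain rfl : d = 0 := by omega
    simp [sum_pow_inversions_wordsWithDowns_zero, qfact]
  | succ m ih =>
    rcases d with _ | e
    · simp [sum_pow_inversions_wordsWithDowns_zero, qfact]
    rw [Nat.cast_succ, sum_pow_inversions_wordsWithDowns_succ, qfact_succ q e,
      show m + 1 - (e + 1) = m - e by omega, qfact_succ q m]
    have ih₀ := ih e (by omega)
    rcases Nat.lt_or_ge e m with hem | hem
    · have ih₁ := ih (e + 1) (by omega)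
      have hfact : qfact q (m - e) = qfact q (m - (e + 1)) * qint q (m - e) := by
        rw [show m - e = m - (e + 1) + 1 by omega, qfact_succ]
      have hint : qint q (m + 1) = qint q (e + 1) + q ^ (e + 1) * qint q (m - e) := by
        rw [← qint_add]; congr 1; omega
      rw [hfact] at ih₀ ⊢
      rw [Nat.cast_succ, qfact_succ] at ih₁
      rw [hint]
      linear_combination (q ^ (e + 1) * qint q (m - e)) * ih₁ + qint q (e + 1) * ih₀
    · obtain rfl : e = m := by omega
      rw [wordsWithDowns_eq_empty (by omega), Finset.sum_empty]
      linear_combination qint q (e + 1) * ih₀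

end InversionGeneratingFunction

lemma sum_pow_inversions_eq_qbinom {K : Type*} [Field K] (q : K) (hq : ∀ j, qfact q j ≠ 0)
    (m : ℕ) (d : ℤ) :
    ∑ u ∈ wordsWithDowns m d, q ^ inversions u = qbinom q m d := by
  unfold qbinom
  split_ifs with hd
  · lift d to ℕ using hd.1
    rw [Int.toNat_natCast, eq_div_iff (mul_ne_zero (hq _) (hq _))]
    exact sum_pow_inversions_mul_qfact q m d (by exact_mod_cast hd.2)
  · rw [wordsWithDowns_eq_empty (by omega), Finset.sum_empty]

lemma qfact_X_sq_ne_zero {K : Type*} [Field K] (m : ℕ) :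
    qfact ((RatFunc.X : RatFunc K) ^ 2) m ≠ 0 := by
  refine Finset.prod_ne_zero_iff.mpr fun j _ hj => ?_
  have hgeom := geom_sum_mul ((RatFunc.X : RatFunc K) ^ 2) (j + 1)
  rw [← qint, hj, zero_mul, eq_comm, sub_eq_zero, ← pow_mul] at hgeom
  have hpoly : (Polynomial.X : Polynomial K) ^ (2 * (j + 1)) = 1 :=
    RatFunc.algebraMap_injective K (by simpa using hgeom)
  simpa using congrArg Polynomial.natDegree hpoly

/-- The horizontal distance from the path `m` to the path `l` on the diagonal `x + y = s`,
when `m` starts at distance `x` to the left of `l`. -/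
def gap (l m : List Bool) (x : ℤ) (s : ℕ) : ℤ :=
  x + (l.take s).count false - (m.take s).count false

/-- Twice the area between the paths `l` and `m`, counted in half-cells. -/
def areaBetween (l m : List Bool) (x : ℤ) : ℤ :=
  ∑ s ∈ Finset.range l.length, (gap l m x s + gap l m x (s + 1))

section Gap

variable {l₁ l₂ m₁ m₂ : List Bool} {x : ℤ}

@[simp]
lemma gap_self (l : List Bool) (s : ℕ) : gap l l 0 s = 0 := by
  simp [gap]

lemma gap_append_of_le (hlen : l₁.length = m₁.length) {s : ℕ} (hs : s ≤ l₁.length) :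
    gap (l₁ ++ l₂) (m₁ ++ m₂) x s = gap l₁ m₁ x s := by
  rw [gap, gap, List.take_append_of_le_length hs, List.take_append_of_le_length (hlen ▸ hs)]

lemma gap_append_length_add (hlen : l₁.length = m₁.length) (s : ℕ) :
    gap (l₁ ++ l₂) (m₁ ++ m₂) x (l₁.length + s)
      = gap l₂ m₂ (gap l₁ m₁ x l₁.length) s := by
  have htake : ∀ {l₁ l₂ : List Bool},
      (l₁ ++ l₂).take (l₁.length + s) = l₁ ++ l₂.take s :=
    fun {l₁ l₂} => by
      rw [List.take_append, Nat.add_sub_cancel_left, List.take_of_length_le (Nat.le_add_right _ _)]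
  simp only [gap]
  rw [htake, hlen, htake, List.take_of_length_le le_rfl, ← hlen, List.take_of_length_le le_rfl,
    List.count_append, List.count_append]
  push_cast
  ring

lemma gap_append_nonneg (hlen : l₁.length = m₁.length) (h₁ : ∀ s, 0 ≤ gap l₁ m₁ x s)
    (h₂ : ∀ s, 0 ≤ gap l₂ m₂ (gap l₁ m₁ x l₁.length) s) (s : ℕ) :
    0 ≤ gap (l₁ ++ l₂) (m₁ ++ m₂) x s := by
  rcases le_or_gt s l₁.length with hs | hs
  · exact gap_append_of_le hlen hs ▸ h₁ s
  · obtain ⟨s, rfl⟩ := Nat.exists_eq_add_of_le hs.le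
    exact gap_append_length_add hlen s ▸ h₂ s

lemma areaBetween_append (hlen : l₁.length = m₁.length) :
    areaBetween (l₁ ++ l₂) (m₁ ++ m₂) x
      = areaBetween l₁ m₁ x + areaBetween l₂ m₂ (gap l₁ m₁ x l₁.length) := by
  rw [areaBetween, List.length_append, Finset.sum_range_add]
  congr 1
  · refine Finset.sum_congr rfl fun s hs => ?_
    rw [Finset.mem_range] at hs
    rw [gap_append_of_le hlen hs.le, gap_append_of_le hlen hs]
  · refine Finset.sum_congr rfl fun s _ => ?_
    rw [add_assoc, gap_append_length_add hlen, gap_append_length_add hlen]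

@[simp]
lemma areaBetween_self (l : List Bool) : areaBetween l l 0 = 0 := by
  simp [areaBetween]

end Gap

def downPrefixSum (w : List Bool) : ℕ :=
  ∑ s ∈ Finset.range w.length, (w.take s).count false

lemma downPrefixSum_cons (b : Bool) (w : List Bool) :
    downPrefixSum (b :: w) = (if b then 0 else w.length) + downPrefixSum w := by
  unfold downPrefixSum
  rw [List.length_cons, Finset.sum_range_succ']
  simp only [List.take_succ_cons, List.count_cons, List.take_zero, List.count_nil,
    Finset.sum_add_distrib, Finset.sum_const, Finset.card_range]
  cases b <;> simp [add_comm]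

lemma downPrefixSum_add_inversions (w : List Bool) :
    2 * (downPrefixSum w : ℤ) + 2 * inversions w + w.count false + (w.count false : ℤ) ^ 2
      = 2 * w.count false * w.length := by
  induction w with
  | nil => simp [downPrefixSum, inversions]
  | cons b w ih =>
    rw [downPrefixSum_cons]
    cases b <;>
    · simp [inversions]
      linear_combination ih

lemma areaBetween_eq (l m : List Bool) (x : ℤ) (hlen : l.length = m.length) :
    areaBetween l m x
      = 2 * (l.length * x + downPrefixSum l - downPrefixSum m) + l.count false - m.count false := by
  have htel := Finset.sum_range_succ_sub_sum (gap l m x) (n := l.length)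
  rw [Finset.sum_range_succ'] at htel
  rw [areaBetween, Finset.sum_add_distrib]
  simp only [downPrefixSum, ← hlen, gap, Finset.sum_sub_distrib, Finset.sum_add_distrib,
    Finset.sum_const, Finset.card_range, nsmul_eq_mul] at htel ⊢
  push_cast at htel ⊢
  simp only [List.take_of_length_le le_rfl, List.take_of_length_le hlen.ge, List.take_zero,
    List.count_nil] at htel ⊢
  linear_combination htel

def valley (a b : ℕ) : List Bool := List.replicate a false ++ List.replicate b true

@[simp]
lemma length_valley (a b : ℕ) : (valley a b).length = a + b := by
  simp [valley]

@[simp]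
lemma count_false_valley (a b : ℕ) : (valley a b).count false = a := by
  simp [valley, List.count_replicate]

section Valley

variable {a b : ℕ} {x y : ℤ} {u : List Bool}

lemma gap_valley_length (hu : u.length = a + b) (hc : (u.count false : ℤ) = a + x - y) :
    gap (valley a b) u x (a + b) = y := by
  rw [gap, List.take_of_length_le (by simp), List.take_of_length_le hu.le, count_false_valley, hc]
  ring

lemma gap_valley_nonneg (hx : 0 ≤ x) (hy : 0 ≤ y) (hc : (u.count false : ℤ) = a + x - y)
    (s : ℕ) : 0 ≤ gap (valley a b) u x s := by
  have hle_s : (u.take s).count false ≤ s :=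
    ((u.take s).count_le_length).trans (List.length_take_le _ _)
  have hle_c : (u.take s).count false ≤ u.count false := (List.take_sublist _ _).count_le _
  have hvalley : ((valley a b).take s).count false = min s a := by
    simp [valley, List.take_append, List.count_replicate]
  rw [gap, hvalley]
  omega

lemma areaBetween_valley (hu : u.length = a + b) (hc : (u.count false : ℤ) = a + x - y) :
    areaBetween (valley a b) u x = 2 * (a * x + b * y) + (x - y) ^ 2 + 2 * inversions u := by
  have hv := downPrefixSum_add_inversions (valley a b)
  have hu' := downPrefixSum_add_inversions u
  rw [valley, inversions_replicate_false_append_replicate_true, ← valley] at hv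
  rw [areaBetween_eq _ _ _ (by simp [hu])]
  simp only [length_valley, count_false_valley, hu] at hv hu' ⊢
  rw [hc] at hu' ⊢
  push_cast at hv hu' ⊢
  linear_combination hv - hu'

end Valley

/-- The part of `Δ_{N 0, …, N r}` between its first and last peak. -/
def zigzag : (ℕ → ℕ) → ℕ → List Bool
  | _, 0 => []
  | N, r + 1 => valley (N 0) (N 1) ++ zigzag (fun i => N (i + 1)) r

lemma length_zigzag (N : ℕ → ℕ) (r : ℕ) :
    (zigzag N r).length = ∑ i ∈ Finset.range r, (N i + N (i + 1)) := by
  induction r generalizing N with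
  | zero => rfl
  | succ r ih => simp [zigzag, ih, Finset.sum_range_succ' _ r, add_comm]

lemma count_false_zigzag (N : ℕ → ℕ) (r : ℕ) :
    (zigzag N r).count false = ∑ i ∈ Finset.range r, N i := by
  induction r generalizing N with
  | zero => rfl
  | succ r ih => simp [zigzag, ih, Finset.sum_range_succ' _ r, add_comm]

lemma two_mul_sum_add_eq (N : ℕ → ℕ) (i : ℕ) :
    2 * ∑ j ∈ Finset.range i, N j + N i = N 0 + (zigzag N i).length := by
  rw [length_zigzag, Finset.sum_add_distrib]
  have h₁ := Finset.sum_range_succ' N i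
  have h₂ := Finset.sum_range_succ N i
  omega

lemma two_mul_sum_range_succ (N : ℕ → ℕ) (r : ℕ) :
    2 * ∑ j ∈ Finset.range (r + 1), N j = N 0 + (zigzag N r).length + N r := by
  have := two_mul_sum_add_eq N r
  rw [Finset.sum_range_succ]
  omega

/-- The peak `P_i` of `deltaComp N` lies on the diagonal `x + y = N 0 + |zigzag N i|`. -/
lemma peak_diagonal (N : ℕ → ℕ) (i : ℕ) :
    2 * ((∑ j ∈ Finset.range i, N j : ℕ) : ℤ) + (N i : ℤ)
      = ((N 0 + (zigzag N i).length : ℕ) : ℤ) := by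
  rw [← two_mul_sum_add_eq]
  push_cast
  ring

lemma length_zigzag_mono (N : ℕ → ℕ) {i r : ℕ} (h : i ≤ r) :
    (zigzag N i).length ≤ (zigzag N r).length := by
  simp only [length_zigzag]
  exact Finset.sum_le_sum_of_subset (Finset.range_subset_range.mpr h)

lemma deltaComp_succ (N : ℕ → ℕ) (r : ℕ) :
    deltaComp N (r + 1)
      = List.replicate (N 0) true ++ (zigzag N r ++ List.replicate (N r) false) := by
  induction r generalizing N with
  | zero => simp [deltaComp, delta, zigzag]
  | succ r ih =>
    have hsplit : deltaComp N (r + 2) = delta (N 0) ++ deltaComp (fun i => N (i + 1)) (r + 1) := by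
      simp [deltaComp, List.range_succ_eq_map (n := r + 1), List.map_map, Function.comp_def]
    rw [hsplit, ih]
    simp [delta, zigzag, valley]

/-- The parts of the paths in `L'` between the first and the last peak. -/
def midWords : (ℕ → ℕ) → (ℕ → ℕ) → ℕ → Finset (List Bool)
  | _, _, 0 => {[]}
  | N, t, r + 1 =>
    (wordsWithDowns (N 0 + N 1) ((N 0 : ℤ) + t 0 - t 1) ×ˢ
        midWords (fun i => N (i + 1)) (fun i => t (i + 1)) r).image fun p => p.1 ++ p.2

lemma mem_midWords_succ {N t : ℕ → ℕ} {r : ℕ} {w : List Bool} :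
    w ∈ midWords N t (r + 1) ↔
      ∃ u ∈ wordsWithDowns (N 0 + N 1) ((N 0 : ℤ) + t 0 - t 1),
        ∃ v ∈ midWords (fun i => N (i + 1)) (fun i => t (i + 1)) r, u ++ v = w := by
  simp only [midWords, Finset.mem_image, Finset.mem_product, Prod.exists, and_assoc,
    exists_and_left]

lemma length_zigzag_succ (N : ℕ → ℕ) (r : ℕ) :
    (zigzag N (r + 1)).length = N 0 + N 1 + (zigzag (fun i => N (i + 1)) r).length := by
  simp [zigzag]

lemma count_false_take_length_zigzag_succ {N : ℕ → ℕ} {u : List Bool} (v : List Bool)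
    (hu : u.length = N 0 + N 1) (r : ℕ) :
    ((u ++ v).take (zigzag N (r + 1)).length).count false
      = u.count false + (v.take (zigzag (fun i => N (i + 1)) r).length).count false := by
  rw [length_zigzag_succ, ← hu, List.take_append, Nat.add_sub_cancel_left,
    List.take_of_length_le (Nat.le_add_right _ _), List.count_append]

lemma mem_midWords {N t : ℕ → ℕ} {r : ℕ} {w : List Bool} :
    w ∈ midWords N t r ↔ w.length = (zigzag N r).length ∧
      ∀ i ≤ r, ((w.take (zigzag N i).length).count false : ℤ)
        = ∑ j ∈ Finset.range i, N j + t 0 - t i := by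
  induction r generalizing N t w with
  | zero =>
    simp [midWords, zigzag, List.length_eq_zero_iff]
  | succ r ih =>
    have hsum_succ : ∀ j, ∑ l ∈ Finset.range (j + 1), N l
        = N 0 + ∑ l ∈ Finset.range j, N (l + 1) := by
      intro j; rw [Finset.sum_range_succ', add_comm]
    rw [mem_midWords_succ]
    constructor
    · rintro ⟨u, hu, v, hv, rfl⟩
      rw [mem_wordsWithDowns] at hu
      obtain ⟨hvlen, hvcount⟩ := ih.mp hv
      refine ⟨by simp [zigzag, hu.1, hvlen], fun i hi => ?_⟩
      rcases i with _ | j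
      · simp [zigzag]
      rw [count_false_take_length_zigzag_succ v hu.1, hsum_succ, Nat.cast_add, hvcount j (by omega)]
      push_cast
      linear_combination hu.2
    · rintro ⟨hwlen, hwcount⟩
      have hw := List.take_append_drop (N 0 + N 1) w
      have hulen : (w.take (N 0 + N 1)).length = N 0 + N 1 := by
        rw [List.length_take, hwlen, length_zigzag_succ]; omega
      have hucount := hwcount 1 (by omega)
      rw [← hw, count_false_take_length_zigzag_succ _ hulen 0] at hucount
      simp only [zigzag, List.length_nil, List.take_zero, List.count_nil, add_zero,
        Finset.sum_range_one] at hucount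
      have hvlen : (w.drop (N 0 + N 1)).length = (zigzag (fun i => N (i + 1)) r).length := by
        rw [List.length_drop, hwlen, length_zigzag_succ]; omega
      refine ⟨w.take (N 0 + N 1), mem_wordsWithDowns.mpr ⟨hulen, hucount⟩, w.drop (N 0 + N 1),
        ih.mpr ⟨hvlen, fun j hj => ?_⟩, hw⟩
      · have h := hwcount (j + 1) (by omega)
        rw [← hw, count_false_take_length_zigzag_succ _ hulen j, hsum_succ] at h
        push_cast at h hucount ⊢
        linear_combination h - hucount

lemma gap_nonneg_of_mem_midWords {N t : ℕ → ℕ} {r : ℕ} {w : List Bool}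
    (hw : w ∈ midWords N t r) (s : ℕ) : 0 ≤ gap (zigzag N r) w (t 0) s := by
  induction r generalizing N t w s with
  | zero =>
    obtain rfl : w = [] := by simpa [midWords] using hw
    simp [gap, zigzag]
  | succ r ih =>
    obtain ⟨u, hu, v, hv, rfl⟩ := mem_midWords_succ.mp hw
    rw [mem_wordsWithDowns] at hu
    refine gap_append_nonneg (by simp [hu.1])
      (gap_valley_nonneg (by positivity) (by positivity) hu.2) ?_ s
    rw [length_valley, gap_valley_length hu.1 hu.2]
    exact ih hv

section Sums

variable {K : Type*} [Field K] (v : K) (hv : v ≠ 0) (hq : ∀ j, qfact (v ^ 2) j ≠ 0)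
include hv hq

lemma sum_pow_areaBetween_valley (a b : ℕ) (x y : ℤ) :
    ∑ u ∈ wordsWithDowns (a + b) (a + x - y), v ^ areaBetween (valley a b) u x
      = v ^ (2 * (a * x + b * y) + (x - y) ^ 2) * qbinom (v ^ 2) (a + b) (a + x - y) := by
  rw [← sum_pow_inversions_eq_qbinom _ hq, Finset.mul_sum]
  refine Finset.sum_congr rfl fun u hu => ?_
  rw [mem_wordsWithDowns] at hu
  rw [areaBetween_valley hu.1 hu.2, zpow_add₀ hv, ← pow_mul, ← zpow_natCast, Nat.cast_mul]
  rfl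

lemma sum_midWords (N t : ℕ → ℕ) (r : ℕ) :
    ∑ w ∈ midWords N t r, v ^ areaBetween (zigzag N r) w (t 0)
      = ∏ i ∈ Finset.range r,
          v ^ (2 * ((N i : ℤ) * t i + (N (i + 1) : ℤ) * t (i + 1))
              + ((t i : ℤ) - t (i + 1)) ^ 2) *
            qbinom (v ^ 2) (N i + N (i + 1)) ((N i : ℤ) + t i - t (i + 1)) := by
  induction r generalizing N t with
  | zero => simp [midWords, zigzag, areaBetween]
  | succ r ih =>
    have ih' := ih (fun i => N (i + 1)) (fun i => t (i + 1))
    beta_reduce at ih'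
    rw [Finset.prod_range_succ', ← ih', ← sum_pow_areaBetween_valley v hv hq,
      Finset.sum_mul_sum, Finset.sum_comm, midWords, Finset.sum_image, Finset.sum_product]
    · refine Finset.sum_congr rfl fun u hu => Finset.sum_congr rfl fun w _ => ?_
      rw [mem_wordsWithDowns] at hu
      rw [zigzag, areaBetween_append (by simp [hu.1]), length_valley,
        gap_valley_length hu.1 hu.2, zpow_add₀ hv, mul_comm]
    · rintro ⟨u₁, w₁⟩ h₁ ⟨u₂, w₂⟩ h₂ h
      simp only [Finset.coe_product, Set.mem_prod, Finset.mem_coe, mem_wordsWithDowns] at h₁ h₂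
      obtain ⟨rfl, rfl⟩ := List.append_inj h (h₁.1.1.trans h₂.1.1.symm)
      rfl

end Sums

lemma pathX_natCast (w : List Bool) (x₀ : ℤ) (s : ℕ) :
    pathX w x₀ s = x₀ + (w.take s).count false := by
  simp [pathX]

lemma pathX_sub_pathX (l m : List Bool) (x : ℤ) (s : ℕ) :
    pathX l 0 s - pathX m (-x) s = gap l m x s := by
  rw [pathX_natCast, pathX_natCast, gap]
  ring

lemma area2_eq_areaBetween {n : ℕ} {lam : List Bool} (hlam : lam.length = 2 * n)
    (mu : List Bool) (a : ℤ) : area2 n lam mu a = areaBetween lam mu a := by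
  rw [area2, areaBetween, hlam]
  refine Finset.sum_congr rfl fun d _ => ?_
  rw [show (d : ℤ) + 1 = ((d + 1 : ℕ) : ℤ) by push_cast; ring, pathX_sub_pathX,
    pathX_sub_pathX]

lemma count_false_take_replicate_append {a b s : ℕ} {w : List Bool} (hs : s ≤ w.length) :
    ((List.replicate a true ++ (w ++ List.replicate b false)).take (a + s)).count false
      = (w.take s).count false := by
  rw [List.take_append, List.take_of_length_le (by simp), List.length_replicate,
    Nat.add_sub_cancel_left, List.take_append_of_le_length hs, List.count_append]
  simp [List.count_replicate]

/-- `L'(λ; t)` for `λ = deltaComp N k`. -/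
def LPrime (N t : ℕ → ℕ) (k : ℕ) : Set (List Bool) :=
  {w : List Bool | w ∈ LSet (∑ j ∈ Finset.range k, N j) (deltaComp N k) 0 0 ∧
    ∀ i < k, pathX w 0 (2 * ((∑ j ∈ Finset.range i, N j : ℕ) : ℤ) + (N i : ℤ))
      = ((∑ j ∈ Finset.range i, N j : ℕ) : ℤ) - (t i : ℤ)}

section LPrime

variable {N t : ℕ → ℕ} {r : ℕ}

lemma gap_zigzag_length_of_mem_midWords {w : List Bool} (hw : w ∈ midWords N t r) :
    gap (zigzag N r) w (t 0) (zigzag N r).length = t r := by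
  have hcount := (mem_midWords.mp hw).2 r le_rfl
  rw [gap, List.take_of_length_le le_rfl, count_false_zigzag, hcount]
  ring

lemma mem_LPrime_of_mem_midWords (ht0 : t 0 = 0) (htr : t r = 0) {w : List Bool}
    (hw : w ∈ midWords N t r) :
    List.replicate (N 0) true ++ (w ++ List.replicate (N r) false) ∈ LPrime N t (r + 1) := by
  obtain ⟨hlen, hcount⟩ := mem_midWords.mp hw
  have hgap := gap_zigzag_length_of_mem_midWords hw
  have hnonneg := gap_nonneg_of_mem_midWords hw
  simp only [ht0, htr, Nat.cast_zero] at hgap hnonneg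
  have hcount_w := hcount r le_rfl
  rw [List.take_of_length_le hlen.le, ht0, htr] at hcount_w
  have h2n := two_mul_sum_range_succ N r
  refine ⟨⟨?_, ?_, fun c hc _ => ?_⟩, fun i hi => ?_⟩
  · simp only [List.length_append, List.length_replicate, hlen]
    omega
  · simp only [List.count_append, List.count_replicate]
    push_cast [Finset.sum_range_succ, hcount_w]
    simp
  · lift c to ℕ using hc
    rw [← sub_nonneg, pathX_sub_pathX, deltaComp_succ]
    refine gap_append_nonneg rfl (fun _ => (gap_self _ _).ge) ?_ c
    rw [gap_self]
    refine gap_append_nonneg hlen.symm hnonneg ?_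
    rw [hgap]
    exact fun _ => (gap_self _ _).ge
  · rw [peak_diagonal, pathX_natCast, count_false_take_replicate_append
      (hlen ▸ length_zigzag_mono N (by omega)), hcount i (by omega), ht0]
    ring

lemma exists_mem_midWords_of_mem_LPrime (ht0 : t 0 = 0) (htr : t r = 0) {mu : List Bool}
    (hmu : mu ∈ LPrime N t (r + 1)) :
    ∃ w ∈ midWords N t r,
      List.replicate (N 0) true ++ (w ++ List.replicate (N r) false) = mu := by
  obtain ⟨⟨hlen, hcount, -⟩, hpeak⟩ := hmu
  have hpeak' : ∀ i ≤ r, ((mu.take (N 0 + (zigzag N i).length)).count false : ℤ)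
      = ((∑ j ∈ Finset.range i, N j : ℕ) : ℤ) - t i := by
    intro i hi
    have h := hpeak i (by omega)
    rwa [peak_diagonal, pathX_natCast, zero_add] at h
  have h2n := two_mul_sum_range_succ N r
  have hlast := hpeak' r le_rfl
  rw [htr, Nat.cast_zero, sub_zero] at hlast
  have hprefix : mu.take (N 0) = List.replicate (N 0) true := by
    have h := hpeak' 0 (Nat.zero_le r)
    simp only [zigzag, List.length_nil, add_zero, Finset.range_zero, Finset.sum_empty, ht0,
      Nat.cast_zero, sub_zero, Nat.cast_eq_zero] at h
    exact eq_replicate_true_iff.mpr ⟨by rw [List.length_take]; omega, h⟩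
  have hsuffix : mu.drop (N 0 + (zigzag N r).length) = List.replicate (N r) false := by
    refine eq_replicate_false_iff.mpr ⟨by rw [List.length_drop]; omega, ?_⟩
    have htotal := congrArg (List.count false)
      (List.take_append_drop (N 0 + (zigzag N r).length) mu)
    rw [List.count_append] at htotal
    push_cast [Finset.sum_range_succ] at hcount hlast
    omega
  generalize hw : (mu.drop (N 0)).take (zigzag N r).length = w
  have hframe : List.replicate (N 0) true ++ (w ++ List.replicate (N r) false) = mu := by
    rw [← hw, ← hprefix, ← hsuffix, ← List.drop_drop, List.take_append_drop,
      List.take_append_drop]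
  have hwlen : w.length = (zigzag N r).length := by
    rw [← hw, List.length_take, List.length_drop]
    omega
  refine ⟨w, mem_midWords.mpr ⟨hwlen, fun i hi => ?_⟩, hframe⟩
  have h := hpeak' i hi
  rw [← hframe, count_false_take_replicate_append
    (hwlen ▸ length_zigzag_mono N hi)] at h
  rw [h, ht0]
  ring

lemma LPrime_eq_image (ht0 : t 0 = 0) (htr : t r = 0) :
    LPrime N t (r + 1) = (midWords N t r).image
      fun w => List.replicate (N 0) true ++ (w ++ List.replicate (N r) false) := by
  ext mu
  rw [Finset.coe_image, Set.mem_image]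
  constructor
  · exact exists_mem_midWords_of_mem_LPrime ht0 htr
  · rintro ⟨w, hw, rfl⟩
    exact mem_LPrime_of_mem_midWords ht0 htr hw

lemma area2_replicate_append (ht0 : t 0 = 0) (htr : t r = 0) {w : List Bool}
    (hw : w ∈ midWords N t r) :
    area2 (∑ j ∈ Finset.range (r + 1), N j) (deltaComp N (r + 1))
        (List.replicate (N 0) true ++ (w ++ List.replicate (N r) false)) 0
      = areaBetween (zigzag N r) w (t 0) := by
  have hlen := (mem_midWords.mp hw).1
  have hgap := gap_zigzag_length_of_mem_midWords hw
  simp only [ht0, htr, Nat.cast_zero] at hgap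
  have hlam : (deltaComp N (r + 1)).length = 2 * ∑ j ∈ Finset.range (r + 1), N j := by
    rw [deltaComp_succ, two_mul_sum_range_succ]
    simp only [List.length_append, List.length_replicate]
    ring
  rw [ht0, Nat.cast_zero, area2_eq_areaBetween hlam, deltaComp_succ, areaBetween_append rfl,
    areaBetween_self, gap_self, zero_add, areaBetween_append hlen.symm, hgap, areaBetween_self,
    add_zero]

end LPrime

/-- **Area lemma.** Let `λ = Δ_{n1,…,nk}` and let `t1, …, tk` be nonnegative
integers with `t1 = tk = 0`.  Let `L'(λ; t1, …, tk)` be the set of paths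
`μ ∈ L(λ; 0, 0)` meeting the line of slope `-1` through the `i`-th peak `P_i`
at `P_i + (-t_i, t_i)` for every `i`.  Then
`Σ_{μ ∈ L'} q^{|λ/μ|}
  = Π_{i=1}^{k-1} q^{n_i t_i + n_{i+1} t_{i+1} + (t_i - t_{i+1})²/2}
      · [n_i + n_{i+1} choose n_i + t_i - t_{i+1}]_q`,
stated in the field of rational functions in `v = q^{1/2} = RatFunc.X`
(so `q = v²` and `q^{|λ/μ|} = v^{2|λ/μ|}`). -/
theorem area_sum_over_Lprime (k : ℕ) (hk : 1 ≤ k) (N : ℕ → ℕ) (t : ℕ → ℕ)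
    (ht1 : t 0 = 0) (htk : t (k - 1) = 0) :
    ∑ᶠ mu ∈ {w : List Bool | w ∈ LSet (∑ j ∈ Finset.range k, N j) (deltaComp N k) 0 0 ∧
        ∀ i < k, pathX w 0 (2 * ((∑ j ∈ Finset.range i, N j : ℕ) : ℤ) + (N i : ℤ))
          = ((∑ j ∈ Finset.range i, N j : ℕ) : ℤ) - (t i : ℤ)},
        (RatFunc.X : RatFunc ℚ) ^ area2 (∑ j ∈ Finset.range k, N j) (deltaComp N k) mu 0
      = ∏ i ∈ Finset.range (k - 1),
          (RatFunc.X : RatFunc ℚ) ^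
              (2 * ((N i : ℤ) * (t i : ℤ) + (N (i + 1) : ℤ) * (t (i + 1) : ℤ)) +
                ((t i : ℤ) - (t (i + 1) : ℤ)) ^ 2) *
            qbinom ((RatFunc.X : RatFunc ℚ) ^ 2) (N i + N (i + 1))
              ((N i : ℤ) + (t i : ℤ) - (t (i + 1) : ℤ)) := by
  obtain ⟨r, rfl⟩ : ∃ r, k = r + 1 := ⟨k - 1, by omega⟩
  rw [Nat.add_sub_cancel] at htk ⊢
  change ∑ᶠ mu ∈ LPrime N t (r + 1), _ = _
  rw [LPrime_eq_image ht1 htk, finsum_mem_coe_finset, Finset.sum_image, ← sum_midWords _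
    RatFunc.X_ne_zero qfact_X_sq_ne_zero]
  · exact Finset.sum_congr rfl fun w hw => by rw [area2_replicate_append ht1 htk hw]
  · intro w₁ _ w₂ _ h
    exact List.append_cancel_right (List.append_cancel_left h)

end DyckTilings
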